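/- The set of k-scoped words over an n-stack partitioned visibly pushdown alphabet is closed under well-matched concatenation: if u and v are k-scoped words in each of which every call of every stack has a matching return within the same word, then uv is k-scoped. -/

import Mathlib

inductive SymKind : Type
  | call | ret | intern
deriving DecidableEq

/-- Stack-semantics matching for stack `h`: scan the word left-to-right,
ignoring all symbols not belonging to stack `h`, pushing call positions of
stack `h` and popping on return positions of stack `h`. -/
def mpairsH {σ : Type*} {n : ℕ} (st : σ → Fin n) (kind : σ → SymKind) (h : Fin n) :
    List σ → ℕ → List ℕ → List (ℕ × ℕ)
  | [], _, _ => []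
  | a :: rest, i, stk =>
    if st a = h then
      match kind a with
      | SymKind.call => mpairsH st kind h rest (i + 1) (i :: stk)
      | SymKind.ret =>
        match stk with
        | [] => mpairsH st kind h rest (i + 1) []
        | c :: stk' => (c, i) :: mpairsH st kind h rest (i + 1) stk'
      | SymKind.intern => mpairsH st kind h rest (i + 1) stk
    else mpairsH st kind h rest (i + 1) stk

/-- `i` and `j` are a matched call–return pair of stack `h` in `w`. -/
def MatchedH {σ : Type*} {n : ℕ} (st : σ → Fin n) (kind : σ → SymKind)
    (h : Fin n) (w : List σ) (i j : ℕ) : Prop :=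
  (i, j) ∈ mpairsH st kind h w 0 []

/-- Position `p` starts a maximal stack-`h` context of `w`. -/
def StartsCtx {σ : Type*} {n : ℕ} (st : σ → Fin n) (h : Fin n) (w : List σ)
    (p : ℕ) : Prop :=
  (∃ a, w[p]? = some a ∧ st a = h) ∧
  (p = 0 ∨ ∀ b, w[p - 1]? = some b → st b ≠ h)

/-- Index (counting from 1) of the maximal stack-`h` context containing or
preceding position `i`: the number of maximal stack-`h` contexts starting at
or before `i`. -/
noncomputable def ctxIdx {σ : Type*} {n : ℕ} (st : σ → Fin n) (h : Fin n)
    (w : List σ) (i : ℕ) : ℕ :=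
  Nat.card {p : ℕ // p ≤ i ∧ StartsCtx st h w p}

/-- `w` is `k`-scoped: every matched return of stack `h` lies within at most
`k` maximal stack-`h` contexts from the one containing its call (inclusive). -/
def KScoped {σ : Type*} {n : ℕ} (st : σ → Fin n) (kind : σ → SymKind) (k : ℕ)
    (w : List σ) : Prop :=
  ∀ (h : Fin n) (i j : ℕ), MatchedH st kind h w i j →
    ctxIdx st h w j < ctxIdx st h w i + k


/-- `w` is well-matched: for every stack, every call position has a matching
return and every return position has a matching call. -/
def WellMatchedAll {σ : Type*} {n : ℕ} (st : σ → Fin n) (kind : σ → SymKind)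
    (w : List σ) : Prop :=
  ∀ h : Fin n,
    (∀ i a, w[i]? = some a → st a = h → kind a = SymKind.call →
      ∃ j, MatchedH st kind h w i j) ∧
    (∀ j a, w[j]? = some a → st a = h → kind a = SymKind.ret →
      ∃ i, MatchedH st kind h w i j)

/-! Scanning `u ++ v` runs the scan of `u` and then that of `v`, started from the stack left
by `u`. When every call of `u` is matched that stack is empty, so the matched pairs of `u ++ v`
are those of `u` together with those of `v` shifted by `u.length`. Context indices of `u ++ v`
agree with those of `u` inside `u`, and past the junction they are those of `v` up to an
additive constant, so the context distance of every matched pair is unchanged. -/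

section Scan

variable {σ : Type*} {n : ℕ} (st : σ → Fin n) (kind : σ → SymKind) (h : Fin n)

/-- One step of the scan defining `mpairsH`: the pair it emits and the stack it leaves. -/
def scanStep (a : σ) (i : ℕ) (stk : List ℕ) : List (ℕ × ℕ) × List ℕ :=
  if st a = h then
    match kind a, stk with
    | SymKind.call, stk => ([], i :: stk)
    | SymKind.ret, [] => ([], [])
    | SymKind.ret, c :: stk' => ([(c, i)], stk')
    | SymKind.intern, stk => ([], stk)
  else ([], stk)

def stkAfter : List σ → ℕ → List ℕ → List ℕ
  | [], _, stk => stk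
  | a :: rest, i, stk => stkAfter rest (i + 1) (scanStep st kind h a i stk).2

variable {st kind h}

theorem mpairsH_cons (a : σ) (rest : List σ) (i : ℕ) (stk : List ℕ) :
    mpairsH st kind h (a :: rest) i stk =
      (scanStep st kind h a i stk).1 ++
        mpairsH st kind h rest (i + 1) (scanStep st kind h a i stk).2 := by
  by_cases hst : st a = h
  · cases hkd : kind a <;> cases stk <;> simp [mpairsH, scanStep, hst, hkd]
  · simp [mpairsH, scanStep, hst]

theorem scanStep_map_add (a : σ) (i d : ℕ) (stk : List ℕ) :
    scanStep st kind h a (i + d) (stk.map (· + d)) =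
      ((scanStep st kind h a i stk).1.map (Prod.map (· + d) (· + d)),
        (scanStep st kind h a i stk).2.map (· + d)) := by
  by_cases hst : st a = h
  · cases hkd : kind a <;> cases stk <;> simp [scanStep, hst, hkd]
  · simp [scanStep, hst]

theorem scanStep_snd_sublist (a : σ) (i : ℕ) (stk : List ℕ) :
    List.Sublist (scanStep st kind h a i stk).2 (i :: stk) := by
  by_cases hst : st a = h
  · cases hkd : kind a <;> cases stk <;> simp [scanStep, hst, hkd]
  · simp [scanStep, hst]

theorem mem_scanStep_snd {a : σ} {i c : ℕ} {stk : List ℕ}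
    (hc : c ∈ (scanStep st kind h a i stk).2) :
    c ∈ stk ∨ c = i ∧ st a = h ∧ kind a = SymKind.call := by
  by_cases hst : st a = h
  · cases hkd : kind a <;> cases stk <;> simp [scanStep, hst, hkd] at hc ⊢ <;> tauto
  · simpa [scanStep, hst] using hc

theorem mem_scanStep_fst {a : σ} {i : ℕ} {stk : List ℕ} {p : ℕ × ℕ}
    (hp : p ∈ (scanStep st kind h a i stk).1) :
    p.2 = i ∧ stk = p.1 :: (scanStep st kind h a i stk).2 := by
  by_cases hst : st a = h
  · cases hkd : kind a <;> cases stk <;> simp [scanStep, hst, hkd] at hp ⊢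
    subst hp
    simp
  · simp [scanStep, hst] at hp

/-- The stack holds distinct positions, decreasing from the top, all before the scan position. -/
theorem pairwise_scanStep_snd (a : σ) {i : ℕ} {stk : List ℕ}
    (hstk : (i :: stk).Pairwise (· > ·)) :
    ((i + 1) :: (scanStep st kind h a i stk).2).Pairwise (· > ·) := by
  have hpush : ((i + 1) :: i :: stk).Pairwise (· > ·) := by
    refine List.pairwise_cons.2 ⟨fun x hx => ?_, hstk⟩
    rcases List.mem_cons.1 hx with rfl | hx
    · exact Nat.lt_succ_self x
    · exact Nat.lt_succ_of_lt (List.rel_of_pairwise_cons hstk hx)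
  exact hpush.sublist ((scanStep_snd_sublist a i stk).cons_cons _)

theorem mpairsH_append (u v : List σ) (i : ℕ) (stk : List ℕ) :
    mpairsH st kind h (u ++ v) i stk =
      mpairsH st kind h u i stk ++
        mpairsH st kind h v (i + u.length) (stkAfter st kind h u i stk) := by
  induction u generalizing i stk with
  | nil => simp [mpairsH, stkAfter]
  | cons a rest ih =>
    rw [List.cons_append, mpairsH_cons, mpairsH_cons, ih, stkAfter, List.append_assoc,
      List.length_cons, Nat.add_right_comm, Nat.add_assoc]

theorem mpairsH_map_add (w : List σ) (i d : ℕ) (stk : List ℕ) :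
    mpairsH st kind h w (i + d) (stk.map (· + d)) =
      (mpairsH st kind h w i stk).map (Prod.map (· + d) (· + d)) := by
  induction w generalizing i stk with
  | nil => simp [mpairsH]
  | cons a rest ih =>
    rw [mpairsH_cons, mpairsH_cons, scanStep_map_add, Nat.add_right_comm, ih, List.map_append]

theorem lt_of_mem_mpairsH {w : List σ} {i c j : ℕ} {stk : List ℕ}
    (hstk : (i :: stk).Pairwise (· > ·)) (hm : (c, j) ∈ mpairsH st kind h w i stk) :
    c < j ∧ j < i + w.length := by
  induction w generalizing i stk with
  | nil => simp [mpairsH] at hm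
  | cons a rest ih =>
    rw [mpairsH_cons, List.mem_append] at hm
    rcases hm with hm | hm
    · obtain ⟨rfl, hpop⟩ := mem_scanStep_fst hm
      rw [hpop] at hstk
      exact ⟨List.rel_of_pairwise_cons hstk List.mem_cons_self, by simp⟩
    · have := ih (pairwise_scanStep_snd a hstk) hm
      simp only [List.length_cons]
      omega

theorem mem_stkAfter {w : List σ} {i c : ℕ} {stk : List ℕ}
    (hc : c ∈ stkAfter st kind h w i stk) :
    c ∈ stk ∨ ∃ p a, c = i + p ∧ w[p]? = some a ∧ st a = h ∧ kind a = SymKind.call := by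
  induction w generalizing i stk with
  | nil => exact Or.inl hc
  | cons a rest ih =>
    rcases ih hc with hc | ⟨p, b, rfl, hb⟩
    · rcases mem_scanStep_snd hc with hc | ⟨rfl, ha⟩
      · exact Or.inl hc
      · exact Or.inr ⟨0, a, rfl, rfl, ha⟩
    · exact Or.inr ⟨p + 1, b, by omega, hb⟩

/-- A matched call has been popped, and the stack never sees its position again. -/
theorem not_mem_stkAfter_of_mem_mpairsH {w : List σ} {i c j : ℕ} {stk : List ℕ}
    (hstk : (i :: stk).Pairwise (· > ·)) (hm : (c, j) ∈ mpairsH st kind h w i stk) :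
    c ∉ stkAfter st kind h w i stk := by
  induction w generalizing i stk with
  | nil => simp [mpairsH] at hm
  | cons a rest ih =>
    rw [mpairsH_cons, List.mem_append] at hm
    rcases hm with hm | hm
    · rw [stkAfter]
      intro hc
      obtain ⟨-, hpop⟩ := mem_scanStep_fst hm
      rw [hpop] at hstk
      have hci : c < i := List.rel_of_pairwise_cons hstk List.mem_cons_self
      rcases mem_stkAfter hc with hc | ⟨p, -, rfl, -⟩
      · exact (List.rel_of_pairwise_cons (List.Pairwise.of_cons hstk) hc).false
      · omega
    · exact ih (pairwise_scanStep_snd a hstk) hm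

theorem stkAfter_eq_nil {w : List σ}
    (hcalls : ∀ i a, w[i]? = some a → st a = h → kind a = SymKind.call →
      ∃ j, MatchedH st kind h w i j) :
    stkAfter st kind h w 0 [] = [] := by
  refine List.eq_nil_iff_forall_not_mem.2 fun c hc => ?_
  rcases mem_stkAfter hc with hc | ⟨p, a, rfl, ha, hst, hkd⟩
  · simp at hc
  · obtain ⟨j, hj⟩ := hcalls p a ha hst hkd
    exact not_mem_stkAfter_of_mem_mpairsH (by simp) hj (by simpa using hc)

theorem matchedH_lt {w : List σ} {i j : ℕ} (hm : MatchedH st kind h w i j) :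
    i < j ∧ j < w.length := by
  simpa using lt_of_mem_mpairsH (by simp) hm

theorem matchedH_append {u v : List σ} {i j : ℕ} (hu : stkAfter st kind h u 0 [] = [])
    (hm : MatchedH st kind h (u ++ v) i j) :
    MatchedH st kind h u i j ∨
      ∃ i' j', MatchedH st kind h v i' j' ∧ i = u.length + i' ∧ j = u.length + j' := by
  unfold MatchedH at hm ⊢
  rw [mpairsH_append, hu, List.mem_append, Nat.zero_add,
    ← Nat.zero_add u.length, ← List.map_nil, mpairsH_map_add, List.mem_map] at hm
  rcases hm with hm | ⟨⟨i', j'⟩, hm, hij⟩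
  · exact Or.inl hm
  · simp only [Prod.map, Prod.mk.injEq] at hij
    exact Or.inr ⟨i', j', hm, by omega, by omega⟩

end Scan

section Contexts

variable {σ : Type*} {n : ℕ} {st : σ → Fin n} {h : Fin n}

open Classical Count in
theorem ctxIdx_eq_count (w : List σ) (i : ℕ) :
    ctxIdx st h w i = Nat.count (StartsCtx st h w) (i + 1) := by
  rw [ctxIdx, Nat.count_eq_card_fintype, ← Nat.card_eq_fintype_card]
  exact Nat.card_congr (Equiv.subtypeEquivRight fun _ => by rw [Nat.lt_succ_iff])

theorem startsCtx_append_left {u v : List σ} {p : ℕ} (hp : p < u.length) :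
    StartsCtx st h (u ++ v) p ↔ StartsCtx st h u p := by
  unfold StartsCtx
  rw [List.getElem?_append_left hp, List.getElem?_append_left (by omega : p - 1 < u.length)]

theorem startsCtx_append_right {u v : List σ} (r : ℕ) :
    StartsCtx st h (u ++ v) (u.length + (r + 1)) ↔ StartsCtx st h v (r + 1) := by
  unfold StartsCtx
  rw [List.getElem?_append_right (by omega), List.getElem?_append_right (by omega),
    show u.length + (r + 1) - u.length = r + 1 by omega,
    show u.length + (r + 1) - 1 - u.length = r + 1 - 1 by omega]
  simp

theorem ctxIdx_append_left {u : List σ} (v : List σ) {i : ℕ} (hi : i < u.length) :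
    ctxIdx st h (u ++ v) i = ctxIdx st h u i :=
  Nat.card_congr <| Equiv.subtypeEquivRight fun _ =>
    and_congr_right fun hp => startsCtx_append_left (lt_of_le_of_lt hp hi)

/-- Past the junction, context indices of `u ++ v` and of `v` differ by a constant: only the
context containing the junction may be counted differently. -/
theorem ctxIdx_append_add (u v : List σ) (q : ℕ) :
    ctxIdx st h (u ++ v) (u.length + q) + ctxIdx st h v 0 =
      ctxIdx st h (u ++ v) u.length + ctxIdx st h v q := by
  classical
  simp only [ctxIdx_eq_count, Nat.add_assoc, Nat.count_add, Nat.count_succ' _ q,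
    Nat.count_one, Nat.count_zero, startsCtx_append_right, Nat.add_zero]
  omega

end Contexts

theorem kscoped_wellMatched_append_general {σ : Type*} {n : ℕ} (st : σ → Fin n)
    (kind : σ → SymKind) (k : ℕ) (u v : List σ)
    (hu : KScoped st kind k u) (hu' : WellMatchedAll st kind u)
    (hv : KScoped st kind k v) :
    KScoped st kind k (u ++ v) := by
  intro h i j hm
  rcases matchedH_append (stkAfter_eq_nil (hu' h).1) hm with hmu | ⟨i', j', hmv, rfl, rfl⟩
  · obtain ⟨hij, hj⟩ := matchedH_lt hmu
    rw [ctxIdx_append_left v hj, ctxIdx_append_left v (hij.trans hj)]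
    exact hu h i j hmu
  · have hi := ctxIdx_append_add (st := st) (h := h) u v i'
    have hj := ctxIdx_append_add (st := st) (h := h) u v j'
    have hscoped := hv h i' j' hmv
    omega

/-- `k`-scoped well-matched words are closed under concatenation. -/
theorem kscoped_wellMatched_append {σ : Type*} {n : ℕ} (st : σ → Fin n)
    (kind : σ → SymKind) (k : ℕ) (u v : List σ)
    (hu : KScoped st kind k u) (hu' : WellMatchedAll st kind u)
    (hv : KScoped st kind k v) (hv' : WellMatchedAll st kind v) :
    KScoped st kind k (u ++ v) :=
  kscoped_wellMatched_append_general st kind k u v hu hu' hv
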